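/- arXiv:2605.31461 — 4 statements merged into one kernel-verified Lean document; each statement's English description precedes it below -/
import Mathlib

section
/- Fixed point lemma with a linear perturbation: Let X be a Banach space, L : X → X a continuous linear operator with ‖L(x)‖ ≤ C₁‖x‖ for all x, and B : X × X → X a continuous bilinear operator with ‖B(x,y)‖ ≤ C₂‖x‖‖y‖ for all x,y. If C₁ ∈ (0,1) and x₀ ∈ X satisfies 4C₂‖x₀‖ < (1−C₁)², then the equation x = x₀ + B(x,x) + L(x) admits a solution x ∈ X satisfying ‖x‖ ≤ 2‖x₀‖/(1−C₁), and this solution is unique among those x with ‖x‖ < (1−C₁)/(2C₂). -/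
theorem stmt_1 {X : Type*} [NormedAddCommGroup X] [NormedSpace ℝ X] [CompleteSpace X]
    (L : X →L[ℝ] X) (B : X →L[ℝ] X →L[ℝ] X) (C₁ C₂ : ℝ)
    (hC₁ : 0 < C₁) (hC₁' : C₁ < 1) (hC₂ : 0 < C₂)
    (hL : ∀ x : X, ‖L x‖ ≤ C₁ * ‖x‖)
    (hB : ∀ x y : X, ‖B x y‖ ≤ C₂ * ‖x‖ * ‖y‖)
    (x₀ : X) (hx₀ : 4 * C₂ * ‖x₀‖ < (1 - C₁) ^ 2) :
    ∃ x : X, x = x₀ + B x x + L x ∧ ‖x‖ ≤ 2 * ‖x₀‖ / (1 - C₁) ∧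
      ∀ y : X, y = x₀ + B y y + L y → ‖y‖ < (1 - C₁) / (2 * C₂) → y = x := by
  have h1 : (0:ℝ) < 1 - C₁ := by linarith
  set r : ℝ := 2 * ‖x₀‖ / (1 - C₁) with hr
  have hx0n : (0:ℝ) ≤ ‖x₀‖ := norm_nonneg _
  have hr0 : 0 ≤ r := by positivity
  have h4 : (1 - C₁) * r = 2 * ‖x₀‖ := by rw [hr]; field_simp
  have hrC : 2 * C₂ * r < 1 - C₁ := by nlinarith [mul_pos hC₂ h1]
  set q : ℝ := 2 * C₂ * r + C₁ with hq
  have hq0 : 0 ≤ q := by positivity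
  have hq1 : q < 1 := by linarith
  -- key estimate for difference of the map at two points
  set f : X → X := fun x => x₀ + B x x + L x with hf
  have key : ∀ u v : X, ‖f u - f v‖ ≤ (C₂ * ‖u‖ + C₂ * ‖v‖ + C₁) * ‖u - v‖ := by
    intro u v
    have e : f u - f v = B u (u - v) + B (u - v) v + L (u - v) := by
      simp only [hf, map_sub, ContinuousLinearMap.sub_apply, map_sub]
      abel
    rw [e]
    calc ‖B u (u - v) + B (u - v) v + L (u - v)‖
        ≤ ‖B u (u - v) + B (u - v) v‖ + ‖L (u - v)‖ := norm_add_le _ _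
      _ ≤ ‖B u (u - v)‖ + ‖B (u - v) v‖ + ‖L (u - v)‖ := by
          gcongr; exact norm_add_le _ _
      _ ≤ C₂ * ‖u‖ * ‖u - v‖ + C₂ * ‖u - v‖ * ‖v‖ + C₁ * ‖u - v‖ := by
          gcongr <;> [exact hB u (u - v); exact hB (u - v) v; exact hL (u - v)]
      _ = (C₂ * ‖u‖ + C₂ * ‖v‖ + C₁) * ‖u - v‖ := by ring
  have hCr2 : C₂ * r ^ 2 ≤ ‖x₀‖ := by
    have hsq : ((1 - C₁) * r) ^ 2 = (2 * ‖x₀‖) ^ 2 := by rw [h4]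
    nlinarith [mul_le_mul_of_nonneg_left hx₀.le hx0n, sq_nonneg (1 - C₁), mul_pos h1 h1]
  set s : Set X := Metric.closedBall (0:X) r with hs
  have hsc : IsComplete s := Metric.isClosed_closedBall.isComplete
  have hsf : Set.MapsTo f s s := by
    intro x hx
    rw [hs, Metric.mem_closedBall, dist_zero_right] at hx ⊢
    have h2 : ‖f x‖ ≤ ‖x₀‖ + C₂ * ‖x‖ * ‖x‖ + C₁ * ‖x‖ := by
      calc ‖f x‖ ≤ ‖x₀ + B x x‖ + ‖L x‖ := norm_add_le _ _
        _ ≤ ‖x₀‖ + ‖B x x‖ + ‖L x‖ := by gcongr; exact norm_add_le _ _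
        _ ≤ ‖x₀‖ + C₂ * ‖x‖ * ‖x‖ + C₁ * ‖x‖ := by
            gcongr; exacts [hB x x, hL x]
    have h3 : C₂ * ‖x‖ * ‖x‖ ≤ C₂ * r ^ 2 := by
      have hnn := norm_nonneg x
      nlinarith [mul_le_mul hx hx hnn hr0]
    nlinarith [norm_nonneg x]
  have hK : ContractingWith ⟨q, hq0⟩ (hsf.restrict f s s) := by
    constructor
    · exact_mod_cast hq1
    · apply LipschitzWith.of_dist_le_mul
      rintro ⟨u, hu⟩ ⟨v, hv⟩
      rw [hs, Metric.mem_closedBall, dist_zero_right] at hu hv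
      simp only [Set.MapsTo.restrict, Subtype.dist_eq, Subtype.map_coe]
      rw [dist_eq_norm, dist_eq_norm]; change ‖f u - f v‖ ≤ q * ‖u - v‖
      calc ‖f u - f v‖ ≤ (C₂ * ‖u‖ + C₂ * ‖v‖ + C₁) * ‖u - v‖ := key u v
        _ ≤ q * ‖u - v‖ := by
            refine mul_le_mul_of_nonneg_right ?_ (norm_nonneg _)
            rw [hq]
            nlinarith [mul_le_mul_of_nonneg_left hu hC₂.le,
              mul_le_mul_of_nonneg_left hv hC₂.le]
  have h0s : (0:X) ∈ s := by
    rw [hs, Metric.mem_closedBall, dist_self]; exact hr0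
  obtain ⟨x, hxs, hfx, -, -⟩ :=
    hK.exists_fixedPoint' hsc hsf h0s (edist_ne_top _ _)
  rw [hs, Metric.mem_closedBall, dist_zero_right] at hxs
  have hfx' : x = x₀ + B x x + L x := hfx.symm
  refine ⟨x, hfx', hxs, ?_⟩
  intro y hy hyn
  have hxr : C₂ * ‖x‖ < (1 - C₁) / 2 := by
    have : C₂ * ‖x‖ ≤ C₂ * r := mul_le_mul_of_nonneg_left hxs hC₂.le
    linarith
  have hyr : C₂ * ‖y‖ < (1 - C₁) / 2 := by
    rw [lt_div_iff₀ (by positivity)] at hyn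
    nlinarith
  have h5 : ‖y - x‖ ≤ (C₂ * ‖y‖ + C₂ * ‖x‖ + C₁) * ‖y - x‖ := by
    have : f y = y := by rw [hf]; exact hy.symm
    have hx' : f x = x := hfx
    calc ‖y - x‖ = ‖f y - f x‖ := by rw [this, hx']
      _ ≤ (C₂ * ‖y‖ + C₂ * ‖x‖ + C₁) * ‖y - x‖ := key y x
  have hc : C₂ * ‖y‖ + C₂ * ‖x‖ + C₁ < 1 := by linarith
  have h6 : ‖y - x‖ = 0 := by
    by_contra h
    have hpos : 0 < ‖y - x‖ := lt_of_le_of_ne (norm_nonneg _) (Ne.symm h)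
    have h7 := mul_lt_mul_of_pos_right hc hpos
    rw [one_mul] at h7
    linarith
  have := norm_eq_zero.mp h6
  exact sub_eq_zero.mp this
end

section
/- Product estimate in Lei-Lin-Gevrey norms via convolution: Let a ≥ 0, σ ≥ 1 and s ≥ −1. There exists a constant C_s such that for all measurable F, G : ℝ³ → [0,∞], ∫_{ℝ³} |ξ|^{s+1} e^{a|ξ|^{1/σ}} (F ∗ G)(ξ) dξ ≤ C_s [ (∫ e^{(a/σ)|η|^{1/σ}} F(η) dη)(∫ |η|^{s+1} e^{a|η|^{1/σ}} G(η) dη) + (∫ |η|^{s+1} e^{a|η|^{1/σ}} F(η) dη)(∫ e^{(a/σ)|η|^{1/σ}} G(η) dη) ], where (F ∗ G)(ξ) = ∫ F(ξ−η) G(η) dη. -/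
open MeasureTheory ENNReal Real

lemma aux_refined {θ x y : ℝ} (hθ0 : 0 < θ) (hθ1 : θ ≤ 1) (hx : 0 ≤ x) (hxy : x ≤ y) :
    (x + y) ^ θ ≤ θ * x ^ θ + y ^ θ := by
  rcases eq_or_lt_of_le hx with h0 | hx0
  · rw [← h0, zero_add]
    simp [Real.zero_rpow hθ0.ne']
  · have hy0 : 0 < y := lt_of_lt_of_le hx0 hxy
    have h1 : x + y = y * (1 + x / y) := by field_simp; ring
    have h2 : (1 + x / y) ^ θ ≤ 1 + θ * (x / y) :=
      rpow_one_add_le_one_add_mul_self (le_trans (by norm_num : (-1:ℝ) ≤ 0) (div_nonneg hx hy0.le)) hθ0.le hθ1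
    have h3 : (x + y) ^ θ = y ^ θ * (1 + x / y) ^ θ := by
      rw [h1, Real.mul_rpow hy0.le (by positivity)]
    have h4 : y ^ θ * (1 + x / y) ^ θ ≤ y ^ θ * (1 + θ * (x / y)) :=
      mul_le_mul_of_nonneg_left h2 (by positivity)
    have h5 : y ^ θ * (1 + θ * (x / y)) = y ^ θ + θ * x * (y ^ θ / y) := by ring
    have h6 : y ^ θ / y = y ^ (θ - 1) := (Real.rpow_sub_one hy0.ne' θ).symm
    have h7 : y ^ (θ - 1) ≤ x ^ (θ - 1) :=
      Real.rpow_le_rpow_of_nonpos hx0 hxy (by linarith)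
    have h8 : θ * x * (y ^ (θ - 1)) ≤ θ * x * (x ^ (θ - 1)) :=
      mul_le_mul_of_nonneg_left h7 (by positivity)
    have h9 : x * x ^ (θ - 1) = x ^ θ := by
      have h := Real.rpow_add hx0 1 (θ - 1)
      rw [Real.rpow_one] at h
      rw [← h]; norm_num
    calc (x + y) ^ θ ≤ y ^ θ + θ * x * (y ^ (θ - 1)) := by rw [h3, ← h6]; linarith
      _ ≤ y ^ θ + θ * x * x ^ (θ - 1) := by linarith
      _ = θ * x ^ θ + y ^ θ := by rw [mul_assoc, h9]; ring

lemma aux_ptwise {a σ s : ℝ} (ha : 0 ≤ a) (hσ : 1 ≤ σ) (hs : -1 ≤ s)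
    {r x y : ℝ} (hr : 0 ≤ r) (hx : 0 ≤ x) (hxy : x ≤ y) (hrxy : r ≤ x + y) :
    r ^ (s+1) * Real.exp (a * r ^ (1/σ)) ≤
      2 ^ (s+1) * (Real.exp ((a/σ) * x ^ (1/σ)) * (y ^ (s+1) * Real.exp (a * y ^ (1/σ)))) := by
  have hσ0 : 0 < σ := lt_of_lt_of_le one_pos hσ
  have hθ0 : 0 < 1/σ := by positivity
  have hθ1 : 1/σ ≤ 1 := by rw [div_le_one hσ0]; exact hσ
  have hy : 0 ≤ y := le_trans hx hxy
  have hs1 : 0 ≤ s + 1 := by linarith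
  have hp : r ^ (s+1) ≤ 2 ^ (s+1) * y ^ (s+1) := by
    have h2y : r ≤ 2 * y := by linarith
    calc r ^ (s+1) ≤ (2*y) ^ (s+1) := Real.rpow_le_rpow hr h2y hs1
      _ = 2 ^ (s+1) * y ^ (s+1) := Real.mul_rpow (by norm_num) hy
  have he : Real.exp (a * r ^ (1/σ)) ≤
      Real.exp ((a/σ) * x ^ (1/σ)) * Real.exp (a * y ^ (1/σ)) := by
    rw [← Real.exp_add]
    apply Real.exp_le_exp.mpr
    have h1 : r ^ (1/σ) ≤ (x + y) ^ (1/σ) := Real.rpow_le_rpow hr hrxy hθ0.le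
    have h2 : (x + y) ^ (1/σ) ≤ (1/σ) * x ^ (1/σ) + y ^ (1/σ) := aux_refined hθ0 hθ1 hx hxy
    have h3 : a * r ^ (1/σ) ≤ a * ((1/σ) * x ^ (1/σ) + y ^ (1/σ)) :=
      mul_le_mul_of_nonneg_left (le_trans h1 h2) ha
    have h4 : a * ((1/σ) * x ^ (1/σ) + y ^ (1/σ)) = a/σ * x ^ (1/σ) + a * y ^ (1/σ) := by
      field_simp
    linarith
  calc r ^ (s+1) * Real.exp (a * r ^ (1/σ))
      ≤ (2 ^ (s+1) * y ^ (s+1)) * (Real.exp ((a/σ) * x ^ (1/σ)) * Real.exp (a * y ^ (1/σ))) :=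
        mul_le_mul hp he (Real.exp_pos _).le (by positivity)
    _ = 2 ^ (s+1) * (Real.exp ((a/σ) * x ^ (1/σ)) * (y ^ (s+1) * Real.exp (a * y ^ (1/σ)))) := by
        ring

lemma aux_enn {a σ s : ℝ} (ha : 0 ≤ a) (hσ : 1 ≤ σ) (hs : -1 ≤ s)
    (ζ η : EuclideanSpace ℝ (Fin 3)) :
    ENNReal.ofReal (‖ζ + η‖ ^ (s+1) * Real.exp (a * ‖ζ + η‖ ^ (1/σ))) ≤
      ENNReal.ofReal ((2:ℝ) ^ (s+1)) *
        (ENNReal.ofReal (Real.exp ((a/σ) * ‖ζ‖ ^ (1/σ))) *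
           ENNReal.ofReal (‖η‖ ^ (s+1) * Real.exp (a * ‖η‖ ^ (1/σ))) +
         ENNReal.ofReal (‖ζ‖ ^ (s+1) * Real.exp (a * ‖ζ‖ ^ (1/σ))) *
           ENNReal.ofReal (Real.exp ((a/σ) * ‖η‖ ^ (1/σ)))) := by
  have hC : (0:ℝ) ≤ 2 ^ (s+1) := (Real.rpow_pos_of_pos two_pos _).le
  have hx : (0:ℝ) ≤ ‖ζ‖ := norm_nonneg _
  have hy : (0:ℝ) ≤ ‖η‖ := norm_nonneg _
  have hXnn : (0:ℝ) ≤ Real.exp ((a/σ) * ‖ζ‖ ^ (1/σ)) * (‖η‖ ^ (s+1) * Real.exp (a * ‖η‖ ^ (1/σ))) := by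
    positivity
  have hYnn : (0:ℝ) ≤ ‖ζ‖ ^ (s+1) * Real.exp (a * ‖ζ‖ ^ (1/σ)) * Real.exp ((a/σ) * ‖η‖ ^ (1/σ)) := by
    positivity
  have hle : ‖ζ + η‖ ^ (s+1) * Real.exp (a * ‖ζ + η‖ ^ (1/σ)) ≤
      2 ^ (s+1) * (Real.exp ((a/σ) * ‖ζ‖ ^ (1/σ)) * (‖η‖ ^ (s+1) * Real.exp (a * ‖η‖ ^ (1/σ))) +
        ‖ζ‖ ^ (s+1) * Real.exp (a * ‖ζ‖ ^ (1/σ)) * Real.exp ((a/σ) * ‖η‖ ^ (1/σ))) := by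
    rcases le_total ‖ζ‖ ‖η‖ with h | h
    · have := aux_ptwise ha hσ hs (norm_nonneg (ζ + η)) hx h (norm_add_le ζ η)
      nlinarith [mul_nonneg hC hYnn]
    · have := aux_ptwise ha hσ hs (norm_nonneg (ζ + η)) hy h
        (le_trans (norm_add_le ζ η) (by linarith))
      nlinarith [mul_nonneg hC hXnn]
  calc ENNReal.ofReal (‖ζ + η‖ ^ (s+1) * Real.exp (a * ‖ζ + η‖ ^ (1/σ)))
      ≤ ENNReal.ofReal ((2:ℝ) ^ (s+1) *
          (Real.exp ((a/σ) * ‖ζ‖ ^ (1/σ)) * (‖η‖ ^ (s+1) * Real.exp (a * ‖η‖ ^ (1/σ))) +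
           ‖ζ‖ ^ (s+1) * Real.exp (a * ‖ζ‖ ^ (1/σ)) * Real.exp ((a/σ) * ‖η‖ ^ (1/σ)))) :=
        ENNReal.ofReal_le_ofReal hle
    _ = _ := by
        rw [ENNReal.ofReal_mul hC, ENNReal.ofReal_add hXnn hYnn,
          ENNReal.ofReal_mul (Real.exp_pos _).le,
          ENNReal.ofReal_mul (by positivity : (0:ℝ) ≤ ‖ζ‖ ^ (s+1) * Real.exp (a * ‖ζ‖ ^ (1/σ)))]

lemma main_aux (A B F G : EuclideanSpace ℝ (Fin 3) → ℝ≥0∞) (hmA : Measurable A) (hmB : Measurable B)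
    (hF : Measurable F) (hG : Measurable G)
    (hBt : ∀ ξ, B ξ ≠ ∞) (Cof : ℝ≥0∞) (hCt : Cof ≠ ∞)
    (hpt : ∀ ζ η, B (ζ + η) ≤ Cof * (A ζ * B η + B ζ * A η)) :
    (∫⁻ ξ, B ξ * ∫⁻ η, F (ξ - η) * G η) ≤
      Cof * ((∫⁻ η, A η * F η) * (∫⁻ η, B η * G η) +
             (∫⁻ η, B η * F η) * (∫⁻ η, A η * G η)) := by
  have hmeas : Measurable fun p : (EuclideanSpace ℝ (Fin 3)) × (EuclideanSpace ℝ (Fin 3)) => B p.1 * (F (p.1 - p.2) * G p.2) :=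
    (hmB.comp measurable_fst).mul
      ((hF.comp (measurable_fst.sub measurable_snd)).mul (hG.comp measurable_snd))
  calc (∫⁻ ξ, B ξ * ∫⁻ η, F (ξ - η) * G η)
      = ∫⁻ ξ, ∫⁻ η, B ξ * (F (ξ - η) * G η) := by
        congr 1; funext ξ
        exact (lintegral_const_mul' _ _ (hBt ξ)).symm
    _ = ∫⁻ η, ∫⁻ ξ, B ξ * (F (ξ - η) * G η) := lintegral_lintegral_swap hmeas.aemeasurable
    _ = ∫⁻ η, ∫⁻ ζ, B (ζ + η) * (F ζ * G η) := by
        congr 1; funext η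
        rw [← lintegral_add_right_eq_self (fun ξ => B ξ * (F (ξ - η) * G η)) η]
        simp [add_sub_cancel_right]
    _ ≤ ∫⁻ η, ∫⁻ ζ, (Cof * (A ζ * B η + B ζ * A η)) * (F ζ * G η) := by
        refine lintegral_mono fun η => lintegral_mono fun ζ => ?_
        exact mul_le_mul_left (hpt ζ η) _
    _ = ∫⁻ η, ∫⁻ ζ, Cof * ((A ζ * F ζ) * (B η * G η) + (B ζ * F ζ) * (A η * G η)) := by
        congr 1; funext η; congr 1; funext ζ; ring
    _ = ∫⁻ η, Cof * ((∫⁻ ζ, A ζ * F ζ) * (B η * G η) + (∫⁻ ζ, B ζ * F ζ) * (A η * G η)) := by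
        congr 1; funext η
        rw [lintegral_const_mul' _ _ hCt,
          lintegral_add_left (f := fun ζ => A ζ * F ζ * (B η * G η)) ((hmA.mul hF).mul_const _),
          lintegral_mul_const (f := fun ζ => A ζ * F ζ) _ (hmA.mul hF),
          lintegral_mul_const (f := fun ζ => B ζ * F ζ) _ (hmB.mul hF)]
    _ = Cof * ((∫⁻ ζ, A ζ * F ζ) * (∫⁻ η, B η * G η) + (∫⁻ ζ, B ζ * F ζ) * (∫⁻ η, A η * G η)) := by
        rw [lintegral_const_mul' _ _ hCt,
          lintegral_add_left (f := fun η => (∫⁻ ζ, A ζ * F ζ) * (B η * G η)) ((hmB.mul hG).const_mul _),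
          lintegral_const_mul (f := fun η => B η * G η) _ (hmB.mul hG),
          lintegral_const_mul (f := fun η => A η * G η) _ (hmA.mul hG)]

theorem stmt_8 (a σ s : ℝ) (ha : 0 ≤ a) (hσ : 1 ≤ σ) (hs : -1 ≤ s) :
    ∃ C : ℝ, 0 < C ∧ ∀ F G : EuclideanSpace ℝ (Fin 3) → ℝ≥0∞,
      Measurable F → Measurable G →
      (∫⁻ ξ, ENNReal.ofReal (‖ξ‖ ^ (s + 1) * Real.exp (a * ‖ξ‖ ^ (1 / σ))) *
          (∫⁻ η, F (ξ - η) * G η)) ≤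
        ENNReal.ofReal C *
          ((∫⁻ η, ENNReal.ofReal (Real.exp ((a / σ) * ‖η‖ ^ (1 / σ))) * F η) *
            (∫⁻ η, ENNReal.ofReal (‖η‖ ^ (s + 1) * Real.exp (a * ‖η‖ ^ (1 / σ))) * G η) +
           (∫⁻ η, ENNReal.ofReal (‖η‖ ^ (s + 1) * Real.exp (a * ‖η‖ ^ (1 / σ))) * F η) *
            (∫⁻ η, ENNReal.ofReal (Real.exp ((a / σ) * ‖η‖ ^ (1 / σ))) * G η)) := by
  refine ⟨2 ^ (s+1), Real.rpow_pos_of_pos two_pos _, fun F G hF hG => ?_⟩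
  have hmB : Measurable fun ξ : EuclideanSpace ℝ (Fin 3) =>
      ENNReal.ofReal (‖ξ‖ ^ (s + 1) * Real.exp (a * ‖ξ‖ ^ (1 / σ))) := by
    apply ENNReal.measurable_ofReal.comp
    exact (measurable_norm.pow_const _).mul
      (Real.measurable_exp.comp (measurable_const.mul (measurable_norm.pow_const _)))
  have hmA : Measurable fun ξ : EuclideanSpace ℝ (Fin 3) =>
      ENNReal.ofReal (Real.exp ((a / σ) * ‖ξ‖ ^ (1 / σ))) := by
    apply ENNReal.measurable_ofReal.comp
    exact Real.measurable_exp.comp (measurable_const.mul (measurable_norm.pow_const _))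
  exact main_aux _ _ F G hmA hmB hF hG (fun ξ => ENNReal.ofReal_ne_top) _
    ENNReal.ofReal_ne_top (fun ζ η => aux_enn ha hσ hs ζ η)
end

section
/- Tail lower bound for the exponential series: For every natural number n₀ ≥ 1 and every x > 0, Σ_{k ≥ n₀} x^k/k! ≥ c · x^{n₀} e^{x/2} where c > 0 depends only on n₀. -/
open Nat

/- Since (k + n)! = C(k + n, n) k! n! ≤ 2^(k + n) k! n!, the k-th term of the tail is at least
x^n / (n! 2^n) times (x/2)^k / k!, and summing over k gives x^n e^{x/2} / (n! 2^n). -/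

theorem Nat.factorial_add_le_two_pow_mul (k n : ℕ) : (k + n)! ≤ 2 ^ (k + n) * k ! * n ! := by
  rw [← Nat.add_choose_mul_factorial_mul_factorial k n]
  gcongr
  exact Nat.choose_le_two_pow _ _

lemma pow_div_mul_half_pow_div_factorial_le {x : ℝ} (hx : 0 ≤ x) (n k : ℕ) :
    x ^ n / (n ! * 2 ^ n) * ((x / 2) ^ k / k !) ≤ x ^ (k + n) / (k + n)! := by
  have hfac : ((k + n)! : ℝ) ≤ 2 ^ (k + n) * k ! * n ! := by
    exact_mod_cast Nat.factorial_add_le_two_pow_mul k n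
  calc x ^ n / (n ! * 2 ^ n) * ((x / 2) ^ k / k !)
      = x ^ (k + n) / (2 ^ (k + n) * k ! * n !) := by
        rw [div_pow, pow_add, pow_add]
        field_simp
    _ ≤ x ^ (k + n) / (k + n)! := by gcongr

theorem pow_div_mul_exp_half_le_tsum_pow_add_div_factorial {x : ℝ} (hx : 0 ≤ x) (n : ℕ) :
    x ^ n / (n ! * 2 ^ n) * Real.exp (x / 2) ≤ ∑' k : ℕ, x ^ (k + n) / (k + n)! := by
  have htail : Summable fun k : ℕ ↦ x ^ (k + n) / (k + n)! :=
    (Real.summable_pow_div_factorial x).comp_injective (add_left_injective n)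
  rw [Real.exp_eq_exp_ℝ, NormedSpace.exp_eq_tsum_div, ← tsum_mul_left]
  exact ((Real.summable_pow_div_factorial (x / 2)).mul_left _).tsum_le_tsum
    (pow_div_mul_half_pow_div_factorial_le hx n) htail

theorem stmt_13_general (n₀ : ℕ) :
    ∃ c : ℝ, 0 < c ∧ ∀ x : ℝ, 0 < x →
      c * x ^ n₀ * Real.exp (x / 2) ≤
        ∑' k : ℕ, x ^ (k + n₀) / ((k + n₀).factorial : ℝ) := by
  refine ⟨(n₀ ! * 2 ^ n₀ : ℝ)⁻¹, by positivity, fun x hx ↦ ?_⟩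
  rw [inv_mul_eq_div]
  exact pow_div_mul_exp_half_le_tsum_pow_add_div_factorial hx.le n₀

theorem stmt_13 (n₀ : ℕ) (hn₀ : 1 ≤ n₀) :
    ∃ c : ℝ, 0 < c ∧ ∀ x : ℝ, 0 < x →
      c * x ^ n₀ * Real.exp (x / 2) ≤
        ∑' k : ℕ, x ^ (k + n₀) / ((k + n₀).factorial : ℝ) :=
  stmt_13_general n₀
end

section
/- Rate lower bound from an integral divergence: Let T* > 0, C > 0 and let ψ : [0,T*) → [0,∞) be locally integrable with ∫_t^{T*} ψ(τ) dτ = ∞ for all t ∈ [0,T*). Suppose in addition that for all 0 ≤ t ≤ T < T*, ψ(T) ≤ e^{C(T−t)} ψ(t) exp(C ∫_t^T ψ(τ) dτ). Then ψ(t) ≥ (e^{C(T*−t)} − 1)^{−1} for every t ∈ [0, T*). -/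
open MeasureTheory

theorem stmt_15 (Tstar C : ℝ) (hT : 0 < Tstar) (hC : 0 < C)
    (ψ : ℝ → ℝ)
    (hψ0 : ∀ t, 0 ≤ t → t < Tstar → 0 ≤ ψ t)
    (hψloc : ∀ T, 0 ≤ T → T < Tstar → IntervalIntegrable ψ volume 0 T)
    (hdiv : ∀ t, 0 ≤ t → t < Tstar →
      (∫⁻ τ in Set.Ico t Tstar, ENNReal.ofReal (ψ τ)) = ⊤)
    (hgron : ∀ t T, 0 ≤ t → t ≤ T → T < Tstar →
      ψ T ≤ Real.exp (C * (T - t)) * ψ t * Real.exp (C * ∫ τ in t..T, ψ τ)) :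
    ∀ t, 0 ≤ t → t < Tstar →
      (Real.exp (C * (Tstar - t)) - 1)⁻¹ ≤ ψ t := by
  intro t ht htT
  by_contra hcon
  push_neg at hcon
  set A := ψ t with hA
  have hA0 : 0 ≤ A := hψ0 t ht htT
  have hEx : 0 < Real.exp (C * (Tstar - t)) - 1 := by
    have : (1:ℝ) < Real.exp (C * (Tstar - t)) := by
      rw [← Real.exp_zero]
      exact Real.exp_lt_exp.mpr (by nlinarith)
    linarith
  have hδ : A * (Real.exp (C * (Tstar - t)) - 1) < 1 := by
    have h := mul_lt_mul_of_pos_right hcon hEx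
    rwa [inv_mul_cancel₀ hEx.ne'] at h
  set δ := A * (Real.exp (C * (Tstar - t)) - 1) with hδdef
  have hδ0 : 0 ≤ δ := mul_nonneg hA0 hEx.le
  -- integrability of ψ on subintervals of [0, Tstar)
  have hψint : ∀ a b : ℝ, 0 ≤ a → a < Tstar → 0 ≤ b → b < Tstar →
      IntervalIntegrable ψ volume a b := by
    intro a b ha haT hb hbT
    exact (hψloc a ha haT).symm.trans (hψloc b hb hbT)
  set F : ℝ → ℝ := fun T => ∫ τ in t..T, ψ τ with hFdef
  have hFcont : ∀ T', t ≤ T' → T' < Tstar → ContinuousOn F (Set.Icc t T') := by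
    intro T' htT' hT'
    have hI : IntegrableOn ψ (Set.uIcc t T') volume := by
      rw [Set.uIcc_of_le htT']
      exact (intervalIntegrable_iff_integrableOn_Icc_of_le htT').mp
        (hψint t T' ht htT (le_trans ht htT') hT')
    have h1 : ContinuousOn F (Set.uIcc t T') :=
      intervalIntegral.continuousOn_primitive_interval hI
    rwa [Set.uIcc_of_le htT'] at h1
  set g : ℝ → ℝ := fun s => A * Real.exp (C * (s - t)) * Real.exp (C * F s) with hgdef
  have hgcont : ∀ T', t ≤ T' → T' < Tstar → ContinuousOn g (Set.Icc t T') := by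
    intro T' htT' hT'
    apply ContinuousOn.mul
    · exact (continuous_const.mul ((continuous_const.mul (continuous_id.sub continuous_const)).rexp)).continuousOn
    · exact (Real.continuous_exp.comp_continuousOn
        ((continuousOn_const.mul (hFcont T' htT' hT'))))
  set H : ℝ → ℝ := fun T => ∫ s in t..T, g s with hHdef
  have hgint : ∀ T, t ≤ T → T < Tstar → IntervalIntegrable g volume t T := by
    intro T hle hlt
    exact ContinuousOn.intervalIntegrable (by rw [Set.uIcc_of_le hle]; exact hgcont T hle hlt)
  have hψle : ∀ s, t ≤ s → s < Tstar → ψ s ≤ g s := by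
    intro s hs hsT
    have := hgron t s ht hs hsT
    calc ψ s ≤ Real.exp (C * (s - t)) * ψ t * Real.exp (C * ∫ τ in t..s, ψ τ) := this
    _ = g s := by simp only [hgdef, hFdef]; ring
  have hFH : ∀ T, t ≤ T → T < Tstar → F T ≤ H T := by
    intro T hle hlt
    apply intervalIntegral.integral_mono_on hle
      (hψint t T ht htT (le_trans ht hle) hlt) (hgint T hle hlt)
    intro s hs
    exact hψle s hs.1 (lt_of_le_of_lt hs.2 hlt)
  have hHcont : ∀ T', t ≤ T' → T' < Tstar → ContinuousOn H (Set.Icc t T') := by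
    intro T' htT' hT'T2
    have hI : IntegrableOn g (Set.uIcc t T') volume := by
      rw [Set.uIcc_of_le htT']
      exact (intervalIntegrable_iff_integrableOn_Icc_of_le htT').mp (hgint T' htT' hT'T2)
    have h1 : ContinuousOn H (Set.uIcc t T') :=
      intervalIntegral.continuousOn_primitive_interval hI
    rwa [Set.uIcc_of_le htT'] at h1
  have hFt : F t = 0 := intervalIntegral.integral_same
  have hHt : H t = 0 := intervalIntegral.integral_same
  -- key bound: exp(-(C*H T)) ≥ 1 - δ for T ∈ [t, Tstar)
  have hkey : ∀ T, t ≤ T → T < Tstar → 1 - δ ≤ Real.exp (-(C * H T)) := by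
    intro T hle hlt
    rcases eq_or_lt_of_le hle with rfl | hlt'
    · rw [hHt]; simp; linarith
    · -- work on Icc t T' with T < T' < Tstar
      set T' := (T + Tstar) / 2 with hT'def
      have hTT' : T < T' := by simp [hT'def]; linarith
      have hT'T : T' < Tstar := by simp [hT'def]; linarith
      have htT'le : t ≤ T' := le_of_lt (lt_of_lt_of_le hlt' hTT'.le)
      set k : ℝ → ℝ := fun x => Real.exp (-(C * H x)) + A * Real.exp (C * (x - t)) with hkdef
      have hkcont : ContinuousOn k (Set.Icc t T') := by
        apply ContinuousOn.add
        · exact Real.continuous_exp.comp_continuousOn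
            ((continuousOn_const.mul (hHcont T' htT'le hT'T)).neg)
        · exact (continuous_const.mul ((continuous_const.mul
            (continuous_id.sub continuous_const)).rexp)).continuousOn
      have hderiv : ∀ x ∈ Set.Ioo t T', HasDerivAt k
          (Real.exp (-(C * H x)) * (-(C * g x)) + A * (Real.exp (C * (x - t)) * C)) x := by
        intro x hx
        have hIoo_open : IsOpen (Set.Ioo t T') := isOpen_Ioo
        have hgcont' : ContinuousOn g (Set.Ioo t T') :=
          (hgcont T' htT'le hT'T).mono (Set.Ioo_subset_Icc_self)
        have hgx : ContinuousAt g x := by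
          have := hgcont'.continuousAt (hIoo_open.mem_nhds hx)
          exact this
        have hHder : HasDerivAt H (g x) x := by
          apply intervalIntegral.integral_hasDerivAt_right
            (hgint x hx.1.le (lt_trans hx.2 hT'T))
            (ContinuousOn.stronglyMeasurableAtFilter hIoo_open hgcont' x hx)
            hgx
        have h1 : HasDerivAt (fun y => Real.exp (-(C * H y)))
            (Real.exp (-(C * H x)) * (-(C * g x))) x :=
          (((hHder.const_mul C).neg).exp)
        have h2 : HasDerivAt (fun y => A * Real.exp (C * (y - t)))
            (A * (Real.exp (C * (x - t)) * C)) x := by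
          have : HasDerivAt (fun y : ℝ => C * (y - t)) C x := by
            simpa using (((hasDerivAt_id x).sub_const t).const_mul C)
          exact (this.exp.const_mul A)
        exact h1.add h2
      have hmono : MonotoneOn k (Set.Icc t T') := by
        apply monotoneOn_of_deriv_nonneg (convex_Icc t T') hkcont
        · intro x hx
          rw [interior_Icc] at hx
          exact ((hderiv x hx).differentiableAt).differentiableWithinAt
        · intro x hx
          rw [interior_Icc] at hx
          rw [(hderiv x hx).deriv]
          have hxT : x < Tstar := lt_trans hx.2 hT'T
          have hFHx : F x ≤ H x := hFH x hx.1.le hxT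
          have : Real.exp (-(C * H x)) * (C * g x) ≤ A * (Real.exp (C * (x - t)) * C) := by
            have hgx : g x = A * Real.exp (C * (x - t)) * Real.exp (C * F x) := rfl
            rw [hgx]
            have hle1 : Real.exp (C * F x) * Real.exp (-(C * H x)) ≤ 1 := by
              rw [← Real.exp_add]
              apply Real.exp_le_one_iff.mpr
              nlinarith
            calc Real.exp (-(C * H x)) * (C * (A * Real.exp (C * (x - t)) * Real.exp (C * F x)))
                = (A * (Real.exp (C * (x - t)) * C)) * (Real.exp (C * F x) * Real.exp (-(C * H x))) := by ring
              _ ≤ (A * (Real.exp (C * (x - t)) * C)) * 1 := by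
                  apply mul_le_mul_of_nonneg_left hle1
                  positivity
              _ = A * (Real.exp (C * (x - t)) * C) := by ring
          linarith
      have hkt : k t = 1 + A := by simp [hkdef, hHt]
      have hle2 : k t ≤ k T := hmono (Set.left_mem_Icc.mpr htT'le)
        (Set.mem_Icc.mpr ⟨hle, hTT'.le⟩) hle
      rw [hkt] at hle2
      have hAexp : A * Real.exp (C * (T - t)) - A ≤ δ := by
        rw [hδdef]
        have : Real.exp (C * (T - t)) ≤ Real.exp (C * (Tstar - t)) :=
          Real.exp_le_exp.mpr (by nlinarith)
        nlinarith
      simp only [hkdef] at hle2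
      linarith
  -- hence H T ≤ M for M := -log(1-δ)/C, and so F T ≤ M
  set M : ℝ := -Real.log (1 - δ) / C with hMdef
  have hFM : ∀ T, t ≤ T → T < Tstar → F T ≤ M := by
    intro T hle hlt
    have h1 := hkey T hle hlt
    have h2 : Real.log (1 - δ) ≤ -(C * H T) :=
      (Real.log_le_iff_le_exp (by linarith)).mpr h1
    have h3 : H T ≤ M := by
      rw [hMdef, le_div_iff₀ hC, mul_comm]
      linarith
    linarith [hFH T hle hlt]
  -- contradiction with divergence: lintegral over Ico t Tstar ≤ ofReal M
  have hM0 : 0 ≤ M := by have := hFM t le_rfl htT; rw [hFt] at this; linarith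
  -- exhaustion sequence
  set a : ℕ → ℝ := fun n => Tstar - (Tstar - t) / (n + 1) with hadef
  have ha0 : a 0 = t := by simp [hadef]
  have haT : ∀ n, a n < Tstar := by
    intro n
    have : (0:ℝ) < (Tstar - t) / (n+1) := div_pos (by linarith) (by positivity)
    simp [hadef]; linarith
  have hat : ∀ n, t ≤ a n := by
    intro n
    have h1 : (Tstar - t) / (n+1) ≤ Tstar - t :=
      div_le_self (by linarith) (by push_cast; linarith [Nat.cast_nonneg (α := ℝ) n])
    simp only [hadef]; linarith
  have hamono : Monotone a := by
    apply monotone_nat_of_le_succ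
    intro n
    have h1 : (Tstar - t) / (n+1+1) ≤ (Tstar - t) / (n+1) := by
      apply div_le_div_of_nonneg_left (by linarith) (by positivity) (by push_cast; linarith)
    simp only [hadef]; push_cast; push_cast at h1; linarith
  have hcover : Set.Ico t Tstar ⊆ ⋃ n, Set.Ico (a n) (a (n+1)) := by
    intro x hx
    obtain ⟨hx1, hx2⟩ := hx
    have hex : ∃ m, x < a (m + 1) := by
      obtain ⟨m, hm⟩ := exists_nat_gt ((Tstar - t) / (Tstar - x))
      refine ⟨m, ?_⟩
      have hpos : 0 < Tstar - x := by linarith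
      have h2 : (Tstar - t) / (Tstar - x) < (m:ℝ) + 1 + 1 := by push_cast at hm ⊢; linarith
      have h3 : (Tstar - t) / ((m:ℝ) + 1 + 1) < Tstar - x := by
        rw [div_lt_iff₀ (by positivity)] at h2 ⊢
        nlinarith
      simp only [hadef]; push_cast; linarith
    classical
    have hn2 : a (Nat.find hex) ≤ x := by
      rcases Nat.eq_zero_or_pos (Nat.find hex) with h | h
      · rw [h, ha0]; exact hx1
      · have hm := Nat.find_min hex (Nat.sub_lt h Nat.one_pos)
        push_neg at hm
        have heq : Nat.find hex - 1 + 1 = Nat.find hex := Nat.succ_pred_eq_of_pos h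
        rwa [heq] at hm
    exact Set.mem_iUnion.mpr ⟨Nat.find hex, hn2, Nat.find_spec hex⟩
  -- each piece
  have hpiece : ∀ n, (∫⁻ τ in Set.Ico (a n) (a (n+1)), ENNReal.ofReal (ψ τ))
      = ENNReal.ofReal (F (a (n+1)) - F (a n)) := by
    intro n
    have hle : a n ≤ a (n+1) := hamono (Nat.le_succ n)
    have hint : IntervalIntegrable ψ volume (a n) (a (n+1)) :=
      hψint _ _ (le_trans ht (hat n)) (haT n) (le_trans ht (hat (n+1))) (haT (n+1))
    have hrestr : volume.restrict (Set.Ico (a n) (a (n+1)))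
        = volume.restrict (Set.Ioc (a n) (a (n+1))) :=
      Measure.restrict_congr_set Ico_ae_eq_Ioc
    rw [hrestr]
    rw [← ofReal_integral_eq_lintegral_ofReal]
    · congr 1
      have h1 : ∫ τ in Set.Ioc (a n) (a (n+1)), ψ τ = ∫ τ in (a n)..(a (n+1)), ψ τ := by
        rw [intervalIntegral.integral_of_le hle]
      rw [h1]
      rw [← intervalIntegral.integral_interval_sub_left
        (hψint t (a (n+1)) ht htT (le_trans ht (hat (n+1))) (haT (n+1)))
        (hψint t (a n) ht htT (le_trans ht (hat n)) (haT n))]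
    · exact hint.1
    · exact Filter.Eventually.mono (ae_restrict_mem measurableSet_Ioc)
        (fun x hx => hψ0 x (le_trans (le_trans ht (hat n)) hx.1.le)
          (lt_of_le_of_lt hx.2 (haT (n+1))))
  have hFmono : ∀ n, 0 ≤ F (a (n+1)) - F (a n) := by
    intro n
    have hle : a n ≤ a (n+1) := hamono (Nat.le_succ n)
    rw [hFdef]
    rw [intervalIntegral.integral_interval_sub_left
        (hψint t (a (n+1)) ht htT (le_trans ht (hat (n+1))) (haT (n+1)))
        (hψint t (a n) ht htT (le_trans ht (hat n)) (haT n))]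
    apply intervalIntegral.integral_nonneg hle
    intro x hx
    exact hψ0 x (le_trans (le_trans ht (hat n)) hx.1) (lt_of_le_of_lt hx.2 (haT (n+1)))
  have hbound : (∫⁻ τ in Set.Ico t Tstar, ENNReal.ofReal (ψ τ)) ≤ ENNReal.ofReal M := by
    calc (∫⁻ τ in Set.Ico t Tstar, ENNReal.ofReal (ψ τ))
        ≤ ∫⁻ τ in ⋃ n, Set.Ico (a n) (a (n+1)), ENNReal.ofReal (ψ τ) :=
          lintegral_mono_set hcover
      _ ≤ ∑' n, ∫⁻ τ in Set.Ico (a n) (a (n+1)), ENNReal.ofReal (ψ τ) :=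
          lintegral_iUnion_le _ _
      _ = ∑' n, ENNReal.ofReal (F (a (n+1)) - F (a n)) := tsum_congr hpiece
      _ ≤ ENNReal.ofReal M := by
          apply ENNReal.tsum_le_of_sum_range_le
          intro n
          rw [← ENNReal.ofReal_sum_of_nonneg (fun i _ => hFmono i)]
          apply ENNReal.ofReal_le_ofReal
          rw [Finset.sum_range_sub (fun i => F (a i))]
          rw [ha0, hFt, sub_zero]
          exact hFM (a n) (hat n) (haT n)
  rw [hdiv t ht htT] at hbound
  exact (ENNReal.ofReal_lt_top.trans_le hbound).false
end
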